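/- Let X = (X₁,…,X_d) be a random vector whose joint distribution function F is a MEV distribution with unit Fréchet marginals, and set l(x₁,…,x_d) = −log F(x₁,…,x_d). Then for all x₁,…,x_d > 0, Var( F₁(X₁)^{x₁} ∨ … ∨ F_d(X_d)^{x_d} ) = l(x₁,…,x_d) / ( (2 + l(x₁,…,x_d)) · (1 + l(x₁,…,x_d))² ). -/

import Mathlib

/-!
Fix `t ∈ (0,1)` and put `s = (-log t)⁻¹`. Off the null set where some `Xᵢ ≤ 0`, we have
`Fᵢ(Xᵢ)^{xᵢ} = exp(-xᵢ/Xᵢ) ≤ t` iff `Xᵢ ≤ s xᵢ`, so max-stability gives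
`P(max_i Fᵢ(Xᵢ)^{xᵢ} ≤ t) = F(s x) = F(x)^{1/s} = t^l`. The maximum `Y` is therefore `Beta(l, 1)`,
and so is `Y²` with parameter `l/2`; the layer-cake formula gives `E Y = l/(l+1)` and
`E Y² = l/(l+2)`.
-/

open MeasureTheory Filter Finset

/-- The joint distribution function of the random vector `X` under `μ`. -/
noncomputable def jointCDF {Ω : Type*} [MeasurableSpace Ω] (μ : Measure Ω) {d : ℕ}
    (X : Fin d → Ω → ℝ) (x : Fin d → ℝ) : ℝ :=
  (μ {ω | ∀ i, X i ω ≤ x i}).toReal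

/-- The marginal distribution function of the `i`-th coordinate of `X` under `μ`. -/
noncomputable def margCDF {Ω : Type*} [MeasurableSpace Ω] (μ : Measure Ω) {d : ℕ}
    (X : Fin d → Ω → ℝ) (i : Fin d) (u : ℝ) : ℝ :=
  (μ {ω | X i ω ≤ u}).toReal

/-- `l^{(I₁,I₂)}(x,y) = -log F(a₁,…,a_d)` where `aᵢ = x` on `I₁`, `aᵢ = y` on `I₂` and
`aᵢ = ∞` otherwise (taking the limit of `F` in those arguments, i.e. dropping the
corresponding constraints). -/
noncomputable def mevL {Ω : Type*} [MeasurableSpace Ω] (μ : Measure Ω) {d : ℕ}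
    (X : Fin d → Ω → ℝ) (I₁ I₂ : Finset (Fin d)) (x y : ℝ) : ℝ :=
  -Real.log (μ {ω | (∀ i ∈ I₁, X i ω ≤ x) ∧ (∀ j ∈ I₂, X j ω ≤ y)}).toReal

/-- The extremal coefficient `ε_I = l^{(I,∅)}(1,1)` of the sub-vector `X_I`. -/
noncomputable def extCoef {Ω : Type*} [MeasurableSpace Ω] (μ : Measure Ω) {d : ℕ}
    (X : Fin d → Ω → ℝ) (I : Finset (Fin d)) : ℝ :=
  mevL μ X I ∅ 1 1

/-- `M(I) = max_{i ∈ I} F_i(X_i)`. -/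
noncomputable def Msub {Ω : Type*} [MeasurableSpace Ω] (μ : Measure Ω) {d : ℕ}
    (X : Fin d → Ω → ℝ) (I : Finset (Fin d)) (hI : I.Nonempty) (ω : Ω) : ℝ :=
  I.sup' hI fun i => margCDF μ X i (X i ω)

/-- The stable tail dependence function `l(x₁,…,x_d) = -log F(x₁,…,x_d)`. -/
noncomputable def stdf {Ω : Type*} [MeasurableSpace Ω] (μ : Measure Ω) {d : ℕ}
    (X : Fin d → Ω → ℝ) (x : Fin d → ℝ) : ℝ :=
  -Real.log (jointCDF μ X x)

/-- `X` has a multivariate extreme value (max-stable) distribution with unit Fréchet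
marginals under the probability measure `μ`. -/
structure IsMEVFrechet {Ω : Type*} [MeasurableSpace Ω] (μ : Measure Ω) {d : ℕ}
    (X : Fin d → Ω → ℝ) : Prop where
  meas : ∀ i, Measurable (X i)
  frechet : ∀ i, ∀ u : ℝ, 0 < u → margCDF μ X i u = Real.exp (-u⁻¹)
  maxStable : ∀ t : ℝ, 0 < t → ∀ x : Fin d → ℝ, (∀ i, 0 < x i) →
    jointCDF μ X (fun i => t * x i) ^ t = jointCDF μ X x

open ProbabilityTheory Topology

section PowerDistribution

variable {Ω : Type*} [MeasurableSpace Ω] {μ : Measure Ω} {Y : Ω → ℝ} {r : ℝ}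

lemma setIntegral_Ioi_indicator_one_sub_rpow (hr : 0 ≤ r) :
    ∫ t in Set.Ioi (0 : ℝ), (Set.Ioo 0 1).indicator (fun t => 1 - t ^ r) t = r / (r + 1) := by
  rw [setIntegral_indicator measurableSet_Ioo,
    Set.inter_eq_self_of_subset_right Set.Ioo_subset_Ioi_self,
    ← integral_Ioc_eq_integral_Ioo, ← intervalIntegral.integral_of_le zero_le_one,
    intervalIntegral.integral_sub intervalIntegrable_const
      (intervalIntegral.intervalIntegrable_rpow' (by linarith)),
    intervalIntegral.integral_const, integral_rpow (Or.inl (by linarith)),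
    Real.one_rpow, Real.zero_rpow (by positivity)]
  field_simp
  ring

lemma measureReal_sq_le_eq_rpow (h0 : ∀ ω, 0 ≤ Y ω)
    (hcdf : ∀ t, 0 < t → t < 1 → μ.real {ω | Y ω ≤ t} = t ^ r) {t : ℝ} (ht0 : 0 < t)
    (ht1 : t < 1) : μ.real {ω | Y ω ^ 2 ≤ t} = t ^ (r / 2) := by
  have hset : {ω | Y ω ^ 2 ≤ t} = {ω | Y ω ≤ √t} := by
    ext ω; exact (Real.le_sqrt (h0 ω) ht0.le).symm
  have hsqrt : √t < 1 := (Real.sqrt_lt' one_pos).2 (by simpa using ht1)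
  rw [hset, hcdf _ (Real.sqrt_pos.2 ht0) hsqrt, Real.sqrt_eq_rpow, ← Real.rpow_mul ht0.le]
  ring_nf

variable [IsProbabilityMeasure μ]

theorem integral_eq_of_measureReal_le_eq_rpow (hY : Measurable Y) (h0 : ∀ ω, 0 ≤ Y ω)
    (h1 : ∀ ω, Y ω ≤ 1) (hr : 0 ≤ r)
    (hcdf : ∀ t, 0 < t → t < 1 → μ.real {ω | Y ω ≤ t} = t ^ r) :
    ∫ ω, Y ω ∂μ = r / (r + 1) := by
  have hint : Integrable Y μ := Integrable.of_bound hY.aestronglyMeasurable 1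
    (ae_of_all _ fun ω => by rw [Real.norm_eq_abs, abs_of_nonneg (h0 ω)]; exact h1 ω)
  rw [hint.integral_eq_integral_meas_lt (ae_of_all _ h0),
    ← setIntegral_Ioi_indicator_one_sub_rpow hr]
  refine setIntegral_congr_fun measurableSet_Ioi fun t ht => ?_
  rw [Set.mem_Ioi] at ht
  rcases lt_or_ge t 1 with ht1 | ht1
  · have hcompl : {ω | t < Y ω} = {ω | Y ω ≤ t}ᶜ := by ext; simp
    rw [Set.indicator_of_mem (Set.mem_Ioo.2 ⟨ht, ht1⟩), ← hcdf t ht ht1, hcompl,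
      probReal_compl_eq_one_sub (measurableSet_le hY measurable_const)]
  · have hempty : {ω | t < Y ω} = ∅ :=
      Set.eq_empty_of_forall_notMem fun ω h => absurd h (not_lt.2 ((h1 ω).trans ht1))
    rw [Set.indicator_of_notMem fun h => absurd h.2 (not_lt.2 ht1), hempty, measureReal_empty]

theorem variance_eq_of_measureReal_le_eq_rpow (hY : Measurable Y) (h0 : ∀ ω, 0 ≤ Y ω)
    (h1 : ∀ ω, Y ω ≤ 1) (hr : 0 ≤ r)
    (hcdf : ∀ t, 0 < t → t < 1 → μ.real {ω | Y ω ≤ t} = t ^ r) :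
    variance Y μ = r / ((2 + r) * (1 + r) ^ 2) := by
  have hmem : MemLp Y 2 μ := MemLp.of_bound hY.aestronglyMeasurable 1
    (ae_of_all _ fun ω => by rw [Real.norm_eq_abs, abs_of_nonneg (h0 ω)]; exact h1 ω)
  have hsq : ∫ ω, Y ω ^ 2 ∂μ = r / (r + 2) := by
    rw [integral_eq_of_measureReal_le_eq_rpow (hY.pow_const 2) (fun ω => sq_nonneg _)
      (fun ω => pow_le_one₀ (h0 ω) (h1 ω)) (by positivity)
      fun t => measureReal_sq_le_eq_rpow h0 hcdf]
    field_simp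
  rw [variance_eq_sub hmem]
  simp only [Pi.pow_apply]
  rw [hsq, integral_eq_of_measureReal_le_eq_rpow hY h0 h1 hr hcdf]
  field_simp
  ring

end PowerDistribution

lemma exp_neg_inv_rpow_le_iff {u a t : ℝ} (hu : 0 < u) (ht0 : 0 < t) (ht1 : t < 1) :
    Real.exp (-u⁻¹) ^ a ≤ t ↔ u ≤ (-Real.log t)⁻¹ * a := by
  have hL : 0 < -Real.log t := neg_pos.2 (Real.log_neg ht0 ht1)
  rw [← Real.exp_mul, ← Real.le_log_iff_exp_le ht0, inv_mul_eq_div, le_div_iff₀ hL,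
    neg_mul, neg_le, inv_mul_eq_div, le_div_iff₀ hu, mul_comm]

noncomputable def maxMargCDFRpow {Ω : Type*} [MeasurableSpace Ω] (μ : Measure Ω) {d : ℕ}
    (X : Fin d → Ω → ℝ) (x : Fin d → ℝ) (hne : (univ : Finset (Fin d)).Nonempty) (ω : Ω) : ℝ :=
  univ.sup' hne fun i => margCDF μ X i (X i ω) ^ x i

section MEV

variable {Ω : Type*} [MeasurableSpace Ω] {μ : Measure Ω} {d : ℕ} {X : Fin d → Ω → ℝ}
  {x : Fin d → ℝ}

lemma jointCDF_nonneg : 0 ≤ jointCDF μ X x := measureReal_nonneg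

lemma maxMargCDFRpow_nonneg (hne : (univ : Finset (Fin d)).Nonempty) (ω : Ω) :
    0 ≤ maxMargCDFRpow μ X x hne ω :=
  have ⟨_, hi⟩ := hne
  (Real.rpow_nonneg measureReal_nonneg _).trans (le_sup' (fun i => margCDF μ X i (X i ω) ^ x i) hi)

lemma IsMEVFrechet.jointCDF_mul (hX : IsMEVFrechet μ X) {s : ℝ} (hs : 0 < s) (hx : ∀ i, 0 < x i) :
    jointCDF μ X (fun i => s * x i) = jointCDF μ X x ^ s⁻¹ := by
  rw [← hX.maxStable s hs x hx, ← Real.rpow_mul jointCDF_nonneg, mul_inv_cancel₀ hs.ne',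
    Real.rpow_one]

variable [IsProbabilityMeasure μ]

lemma margCDF_mono (i : Fin d) : Monotone (margCDF μ X i) := fun _ _ huv =>
  measureReal_mono fun _ h => le_trans h huv

lemma jointCDF_le_one : jointCDF μ X x ≤ 1 := measureReal_le_one

lemma stdf_nonneg : 0 ≤ stdf μ X x :=
  neg_nonneg.2 (Real.log_nonpos measureReal_nonneg jointCDF_le_one)

lemma measurable_maxMargCDFRpow (hmeas : ∀ i, Measurable (X i))
    (hne : (univ : Finset (Fin d)).Nonempty) : Measurable (maxMargCDFRpow μ X x hne) := by
  have heq : maxMargCDFRpow μ X x hne = univ.sup' hne fun i ω => margCDF μ X i (X i ω) ^ x i := by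
    ext ω; simp [maxMargCDFRpow, Finset.sup'_apply]
  exact heq ▸ measurable_sup' hne fun i _ =>
    ((margCDF_mono i).measurable.comp (hmeas i)).pow_const _

lemma maxMargCDFRpow_le_one (hx : ∀ i, 0 ≤ x i) (hne : (univ : Finset (Fin d)).Nonempty)
    (ω : Ω) : maxMargCDFRpow μ X x hne ω ≤ 1 :=
  sup'_le _ _ fun i _ => Real.rpow_le_one measureReal_nonneg measureReal_le_one (hx i)

namespace IsMEVFrechet

lemma measure_le_zero (hX : IsMEVFrechet μ X) (i : Fin d) : μ {ω | X i ω ≤ 0} = 0 := by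
  have hlim : Tendsto (fun u : ℝ => Real.exp (-u⁻¹)) (𝓝[>] 0) (𝓝 0) :=
    Real.tendsto_exp_atBot.comp (tendsto_neg_atTop_atBot.comp tendsto_inv_nhdsGT_zero)
  have hle : μ.real {ω | X i ω ≤ 0} ≤ 0 :=
    ge_of_tendsto hlim <| eventually_mem_nhdsWithin.mono fun u (hu : 0 < u) =>
      hX.frechet i u hu ▸ measureReal_mono fun _ h => le_trans h hu.le
  exact (measureReal_eq_zero_iff).1 (le_antisymm hle measureReal_nonneg)

lemma ae_pos (hX : IsMEVFrechet μ X) : ∀ᵐ ω ∂μ, ∀ i, 0 < X i ω :=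
  ae_all_iff.2 fun i =>
    (measure_eq_zero_iff_ae_notMem.1 (hX.measure_le_zero i)).mono fun _ h => not_le.1 h

/-- If `F(x) = 0`, max-stability forces `F(n x) = 0` for all `n`, but these events exhaust `Ω`. -/
lemma jointCDF_pos (hX : IsMEVFrechet μ X) (hx : ∀ i, 0 < x i) : 0 < jointCDF μ X x := by
  refine jointCDF_nonneg.lt_of_ne' fun hF => ?_
  have hnull : ∀ n : ℕ, μ {ω | ∀ i, X i ω ≤ ((n : ℝ) + 1) * x i} = 0 := fun n => by
    have h := hX.maxStable (n + 1) (by positivity) x hx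
    rw [hF, Real.rpow_eq_zero jointCDF_nonneg (by positivity)] at h
    exact (measureReal_eq_zero_iff).1 h
  have hcover : ⋃ n : ℕ, {ω | ∀ i, X i ω ≤ ((n : ℝ) + 1) * x i} = Set.univ :=
    Set.eq_univ_of_forall fun ω => Set.mem_iUnion.2 <| (eventually_all.2 fun i =>
      ((tendsto_atTop_add_const_right _ 1 tendsto_natCast_atTop_atTop).atTop_mul_const
        (hx i)).eventually_ge_atTop (X i ω)).exists
  simpa [hcover] using measure_iUnion_null hnull

lemma measureReal_maxMargCDFRpow_le (hX : IsMEVFrechet μ X) (hx : ∀ i, 0 < x i)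
    (hne : (univ : Finset (Fin d)).Nonempty) {t : ℝ} (ht0 : 0 < t) (ht1 : t < 1) :
    μ.real {ω | maxMargCDFRpow μ X x hne ω ≤ t} = t ^ stdf μ X x := by
  have hL : 0 < -Real.log t := neg_pos.2 (Real.log_neg ht0 ht1)
  have hevent : {ω | maxMargCDFRpow μ X x hne ω ≤ t}
      =ᵐ[μ] {ω | ∀ i, X i ω ≤ (-Real.log t)⁻¹ * x i} :=
    hX.ae_pos.mono fun ω hω => propext <| by
      simp only [maxMargCDFRpow, sup'_le_iff, mem_univ, true_implies]
      exact forall_congr' fun i => by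
        rw [hX.frechet i _ (hω i), exp_neg_inv_rpow_le_iff (hω i) ht0 ht1]
  rw [measureReal_congr hevent]
  change jointCDF μ X (fun i => _ * x i) = _
  rw [hX.jointCDF_mul (inv_pos.2 hL) hx, inv_inv, Real.rpow_def_of_pos (hX.jointCDF_pos hx),
    Real.rpow_def_of_pos ht0, stdf]
  ring_nf

end IsMEVFrechet

end MEV

open ProbabilityTheory in
/-- For a MEV distribution with unit Fréchet marginals and `l = -log F`,
`Var(F₁(X₁)^{x₁} ∨ … ∨ F_d(X_d)^{x_d}) = l/((2 + l)(1 + l)²)` with `l = l(x₁,…,x_d)`. -/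
theorem statement15 {Ω : Type*} [MeasurableSpace Ω] (μ : Measure Ω) [IsProbabilityMeasure μ]
    {d : ℕ} (hd : 0 < d) (X : Fin d → Ω → ℝ) (hX : IsMEVFrechet μ X)
    (x : Fin d → ℝ) (hx : ∀ i, 0 < x i) :
    variance (fun ω => Finset.univ.sup' ⟨⟨0, hd⟩, Finset.mem_univ _⟩
        (fun i => margCDF μ X i (X i ω) ^ x i)) μ
      = stdf μ X x / ((2 + stdf μ X x) * (1 + stdf μ X x) ^ 2) := by
  have hne : (univ : Finset (Fin d)).Nonempty := ⟨⟨0, hd⟩, mem_univ _⟩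
  exact variance_eq_of_measureReal_le_eq_rpow (measurable_maxMargCDFRpow hX.meas hne)
    (maxMargCDFRpow_nonneg hne) (maxMargCDFRpow_le_one (fun i => (hx i).le) hne) stdf_nonneg
    fun t => hX.measureReal_maxMargCDFRpow_le hx hne
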